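/- Any vector field X on ℝ^d (d > 2) with flat metric whose components satisfy the conformal Killing equation ∂_α X_β + ∂_β X_α = (2/d)(div X) δ_{αβ} has all third-order partial derivatives of its components equal to zero; hence each component of X is a polynomial of degree at most 2. -/

import Mathlib

/-- The partial derivative `∂_i f` of a scalar function on `ℝ^d`. -/
noncomputable def pd {d : ℕ} (i : Fin d) (f : (Fin d → ℝ) → ℝ) : (Fin d → ℝ) → ℝ :=
  fun x => fderiv ℝ f x (Pi.single i 1)

lemma pd_smooth {f : (Fin d → ℝ) → ℝ} (hf : ContDiff ℝ (⊤ : ℕ∞) f) (i : Fin d) :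
    ContDiff ℝ (⊤ : ℕ∞) (pd i f) :=
  (hf.fderiv_right (m := (⊤ : ℕ∞)) (by simp)).clm_apply contDiff_const

lemma pd_add {f g : (Fin d → ℝ) → ℝ} (hf : Differentiable ℝ f) (hg : Differentiable ℝ g)
    (i : Fin d) (x : Fin d → ℝ) :
    pd i (fun y => f y + g y) x = pd i f x + pd i g x := by
  simp [pd, fderiv_fun_add (hf x) (hg x)]

lemma pd_const_mul {f : (Fin d → ℝ) → ℝ} (hf : Differentiable ℝ f) (c : ℝ)
    (i : Fin d) (x : Fin d → ℝ) :
    pd i (fun y => c * f y) x = c * pd i f x := by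
  simp [pd, fderiv_const_mul (hf x) c]

lemma pd_sub {f g : (Fin d → ℝ) → ℝ} (hf : Differentiable ℝ f) (hg : Differentiable ℝ g)
    (i : Fin d) (x : Fin d → ℝ) :
    pd i (fun y => f y - g y) x = pd i f x - pd i g x := by
  simp [pd, fderiv_fun_sub (hf x) (hg x)]

lemma pd_congr {f g : (Fin d → ℝ) → ℝ} (h : ∀ x, f x = g x) (i : Fin d) (x : Fin d → ℝ) :
    pd i f x = pd i g x := by
  have : f = g := funext h
  rw [this]

lemma pd_comm {f : (Fin d → ℝ) → ℝ} (hf : ContDiff ℝ (⊤ : ℕ∞) f) (i j : Fin d) (x : Fin d → ℝ) :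
    pd i (pd j f) x = pd j (pd i f) x := by
  have hsymm : IsSymmSndFDerivAt ℝ f x := hf.contDiffAt.isSymmSndFDerivAt (by
    rw [minSmoothness_of_isRCLikeNormedField]; exact WithTop.coe_le_coe.mpr le_top)
  have hdf : DifferentiableAt ℝ (fderiv ℝ f) x :=
    ((hf.fderiv_right (m := (⊤ : ℕ∞)) (by simp)).differentiable (by simp)) x
  have e : ∀ v w : Fin d → ℝ,
      fderiv ℝ (fun y => fderiv ℝ f y v) x w = fderiv ℝ (fderiv ℝ f) x w v := by
    intro v w
    rw [fderiv_clm_apply hdf (differentiableAt_const v)]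
    simp
  show fderiv ℝ (fun y => fderiv ℝ f y (Pi.single j 1)) x (Pi.single i 1) = _
  rw [e, hsymm]
  rw [pd]
  exact (e (Pi.single i 1) (Pi.single j 1)).symm





variable {d : ℕ}

lemma coord_smooth (j : Fin d) : ContDiff ℝ (⊤ : ℕ∞) (fun x : Fin d → ℝ => x j) :=
  (contDiff_pi.mp contDiff_id) j

lemma pd_coord (i j : Fin d) (x : Fin d → ℝ) :
    pd i (fun y : Fin d → ℝ => y j) x = if i = j then 1 else 0 := by
  have h : (fun y : Fin d → ℝ => y j)
      = (ContinuousLinearMap.proj j : (Fin d → ℝ) →L[ℝ] ℝ) := rfl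
  rw [pd, h, ContinuousLinearMap.fderiv]
  simp [Pi.single_apply, eq_comm]

lemma pd_mul {f g : (Fin d → ℝ) → ℝ} (hf : Differentiable ℝ f) (hg : Differentiable ℝ g)
    (i : Fin d) (x : Fin d → ℝ) :
    pd i (fun y => f y * g y) x = pd i f x * g x + f x * pd i g x := by
  simp [pd, fderiv_fun_mul (hf x) (hg x)]
  ring

lemma fderiv_eq_zero_of_pd {f : (Fin d → ℝ) → ℝ} (y : Fin d → ℝ)
    (h : ∀ i, pd i f y = 0) : fderiv ℝ f y = 0 := by
  apply ContinuousLinearMap.coe_injective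
  exact Module.Basis.ext (Pi.basisFun ℝ (Fin d)) (fun i => by simpa [Pi.basisFun_apply, pd] using h i)

lemma const_of_pd_zero {f : (Fin d → ℝ) → ℝ} (hf : ContDiff ℝ (⊤ : ℕ∞) f)
    (h : ∀ i x, pd i f x = 0) (x : Fin d → ℝ) : f x = f 0 :=
  is_const_of_fderiv_eq_zero (hf.differentiable (by simp))
    (fun y => fderiv_eq_zero_of_pd y (fun i => h i y)) x 0



lemma pd_sum {ι : Type*} (s : Finset ι) {f : ι → (Fin d → ℝ) → ℝ}
    (hf : ∀ k ∈ s, Differentiable ℝ (f k)) (i : Fin d) (x : Fin d → ℝ) :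
    pd i (fun y => ∑ k ∈ s, f k y) x = ∑ k ∈ s, pd i (f k) x := by
  simp only [pd]
  rw [fderiv_fun_sum (fun k hk => (hf k hk) x)]
  simp

lemma affine_of_pd2_zero {f : (Fin d → ℝ) → ℝ} (hf : ContDiff ℝ (⊤ : ℕ∞) f)
    (h : ∀ i j x, pd i (pd j f) x = 0) (x : Fin d → ℝ) :
    f x = f 0 + ∑ j, pd j f 0 * x j := by
  set g : (Fin d → ℝ) → ℝ := fun y => f y - ∑ j, pd j f 0 * y j with hg
  have hterm : ∀ j : Fin d, ContDiff ℝ (⊤ : ℕ∞) (fun y : Fin d → ℝ => pd j f 0 * y j) :=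
    fun j => contDiff_const.mul (coord_smooth j)
  have hsum : ContDiff ℝ (⊤ : ℕ∞) (fun y : Fin d → ℝ => ∑ j, pd j f 0 * y j) :=
    ContDiff.sum fun j _ => hterm j
  have hgsm : ContDiff ℝ (⊤ : ℕ∞) g := hf.sub hsum
  have hpg : ∀ i z, pd i g z = 0 := by
    intro i z
    have h1 : pd i g z = pd i f z - ∑ j, pd j f 0 * (if i = j then 1 else 0) := by
      rw [hg]
      rw [pd_sub (hf.differentiable (by simp)) (hsum.differentiable (by simp)) i z,
        pd_sum Finset.univ (fun j _ => (hterm j).differentiable (by simp)) i z]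
      congr 1
      refine Finset.sum_congr rfl fun j _ => ?_
      rw [pd_const_mul ((coord_smooth j).differentiable (by simp)) _ i z, pd_coord]
    have h2 : pd i f z = pd i f 0 :=
      const_of_pd_zero (pd_smooth hf i) (fun k y => h k i y) z
    rw [h1, h2]
    simp
  have hc := const_of_pd_zero hgsm hpg x
  have hg0 : g 0 = f 0 := by simp [hg]
  have : g x = f x - ∑ j, pd j f 0 * x j := rfl
  rw [this, hg0] at hc
  linarith

lemma quad_of_pd3_zero {f : (Fin d → ℝ) → ℝ} (hf : ContDiff ℝ (⊤ : ℕ∞) f)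
    (h : ∀ i j k x, pd i (pd j (pd k f)) x = 0) (x : Fin d → ℝ) :
    f x = f 0 + ∑ j, pd j f 0 * x j
      + ∑ i, ∑ j, (pd i (pd j f) 0 / 2) * (x i * x j) := by
  set a : Fin d → Fin d → ℝ := fun i j => pd i (pd j f) 0 with ha
  have hasymm : ∀ i j, a i j = a j i := fun i j => pd_comm hf i j 0
  have haconst : ∀ i j z, pd i (pd j f) z = a i j := fun i j z =>
    const_of_pd_zero (pd_smooth (pd_smooth hf j) i) (fun k y => h k i j y) z
  have hterm : ∀ i j : Fin d, ContDiff ℝ (⊤ : ℕ∞) (fun y : Fin d → ℝ => (a i j / 2) * (y i * y j)) :=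
    fun i j => contDiff_const.mul ((coord_smooth i).mul (coord_smooth j))
  have hsum : ContDiff ℝ (⊤ : ℕ∞) (fun y : Fin d → ℝ => ∑ i, ∑ j, (a i j / 2) * (y i * y j)) :=
    ContDiff.sum fun i _ => ContDiff.sum fun j _ => hterm i j
  set g : (Fin d → ℝ) → ℝ := fun y => f y - ∑ i, ∑ j, (a i j / 2) * (y i * y j) with hg
  have hgsm : ContDiff ℝ (⊤ : ℕ∞) g := hf.sub hsum
  -- first derivative of g
  have hpg : ∀ k z, pd k g z = pd k f z - ∑ j, a k j * z j := by
    intro k z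
    rw [hg, pd_sub (hf.differentiable (by simp)) (hsum.differentiable (by simp)) k z]
    have e1 : pd k (fun y : Fin d → ℝ => ∑ i, ∑ j, (a i j / 2) * (y i * y j)) z
        = ∑ i, ∑ j, (a i j / 2) *
          ((if k = i then 1 else 0) * z j + z i * (if k = j then 1 else 0)) := by
      rw [pd_sum Finset.univ
        (fun i _ => Differentiable.fun_sum fun j _ => (hterm i j).differentiable (by simp)) k z]
      refine Finset.sum_congr rfl fun i _ => ?_
      rw [pd_sum Finset.univ (fun j _ => (hterm i j).differentiable (by simp)) k z]
      refine Finset.sum_congr rfl fun j _ => ?_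
      rw [pd_const_mul (((coord_smooth i).mul (coord_smooth j)).differentiable (by simp)) _ k z,
        pd_mul ((coord_smooth i).differentiable (by simp))
          ((coord_smooth j).differentiable (by simp)) k z, pd_coord, pd_coord]
    rw [e1]
    congr 1
    have e2 : ∀ i j : Fin d, (a i j / 2) *
          ((if k = i then 1 else 0) * z j + z i * (if k = j then 1 else 0))
        = (if k = i then (a i j / 2) * z j else 0) + (if k = j then (a i j / 2) * z i else 0) := by
      intro i j
      split_ifs <;> ring
    simp only [e2, Finset.sum_add_distrib]
    have e5 : ∀ i : Fin d, (∑ j, if k = i then a i j / 2 * z j else 0)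
        = if k = i then ∑ j, a i j / 2 * z j else 0 := fun i => by split_ifs <;> simp
    simp only [e5, Finset.sum_ite_eq, Finset.mem_univ, if_true]
    rw [← Finset.sum_add_distrib]
    refine Finset.sum_congr rfl fun j _ => ?_
    rw [hasymm j k]
    ring
  -- second derivatives of g vanish
  have hpg2 : ∀ l k z, pd l (pd k g) z = 0 := by
    intro l k z
    have e3 : pd l (pd k g) z = pd l (fun y => pd k f y - ∑ j, a k j * y j) z :=
      pd_congr (fun y => by rw [hpg k y]) l z
    rw [e3, pd_sub ((pd_smooth hf k).differentiable (by simp))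
      ((Differentiable.fun_sum fun j _ =>
        ((contDiff_const.mul (coord_smooth j)).differentiable (by simp)))) l z,
      pd_sum Finset.univ (fun j _ =>
        (contDiff_const.mul (coord_smooth j)).differentiable (by simp)) l z]
    have e4 : ∀ j ∈ Finset.univ, pd l (fun y : Fin d → ℝ => a k j * y j) z
        = a k j * (if l = j then 1 else 0) := fun j _ => by
      rw [pd_const_mul ((coord_smooth j).differentiable (by simp)) _ l z, pd_coord]
    rw [Finset.sum_congr rfl e4, haconst l k z]
    simp [hasymm l k]
  -- conclude
  have haff := affine_of_pd2_zero hgsm hpg2 x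
  have hg0 : g 0 = f 0 := by simp [hg]
  have hpgj : ∀ j, pd j g 0 = pd j f 0 := fun j => by rw [hpg j 0]; simp
  have hgx : g x = f x - ∑ i, ∑ j, (a i j / 2) * (x i * x j) := rfl
  rw [hgx, hg0] at haff
  have : ∑ j, pd j g 0 * x j = ∑ j, pd j f 0 * x j :=
    Finset.sum_congr rfl fun j _ => by rw [hpgj j]
  rw [this] at haff
  linarith

lemma pick_third {d : ℕ} (hd : 2 < d) (u v : Fin d) : ∃ w : Fin d, w ≠ u ∧ w ≠ v := by
  have hcard : ({u, v} : Finset (Fin d)).card ≤ 2 :=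
    (Finset.card_insert_le _ _).trans (by simp)
  have h1 : (Finset.univ : Finset (Fin d)).card = d := by simp
  have h2 := Finset.le_card_sdiff ({u, v} : Finset (Fin d)) Finset.univ
  have h3 : 0 < (Finset.univ \ ({u, v} : Finset (Fin d))).card := by omega
  obtain ⟨w, hw⟩ := Finset.card_pos.mp h3
  rw [Finset.mem_sdiff, Finset.mem_insert, Finset.mem_singleton] at hw
  exact ⟨w, fun h => hw.2 (Or.inl h), fun h => hw.2 (Or.inr h)⟩

lemma K_zero {d : ℕ} (hd : 2 < d) (K : Fin d → Fin d → ℝ)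
    (hsym : ∀ i j, K i j = K j i)
    (hE : ∀ μ a b g : Fin d,
      K μ a * (if b = g then (1:ℝ) else 0) + K μ b * (if a = g then 1 else 0)
        - K μ g * (if a = b then 1 else 0)
      = K b a * (if μ = g then 1 else 0) + K b μ * (if a = g then 1 else 0)
        - K b g * (if a = μ then 1 else 0)) :
    ∀ i j, K i j = 0 := by
  have hdiag : ∀ μ β : Fin d, μ ≠ β → K μ μ = -K β β := by
    intro μ β hne
    have h := hE μ μ β β
    simp [hne, fun h' : β = μ => hne h'.symm] at h
    linarith
  have hdiag0 : ∀ μ : Fin d, K μ μ = 0 := by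
    intro μ
    obtain ⟨β, hβμ, -⟩ := pick_third hd μ μ
    obtain ⟨γ, hγμ, hγβ⟩ := pick_third hd μ β
    have h1 := hdiag μ β (Ne.symm hβμ)
    have h2 := hdiag μ γ (Ne.symm hγμ)
    have h3 := hdiag β γ (Ne.symm hγβ)
    linarith
  intro i j
  by_cases hij : i = j
  · rw [hij]; exact hdiag0 j
  · obtain ⟨β, hβi, hβj⟩ := pick_third hd i j
    have h := hE i j β β
    have hβi' : i ≠ β := Ne.symm hβi
    have hβj' : j ≠ β := Ne.symm hβj
    have hji : ¬ j = i := fun h' => hij h'.symm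
    simp [hβi', hβj', hij, hji] at h
    exact h

/-- A smooth conformal Killing vector field on flat `ℝ^d`, `d > 2`, has vanishing third
derivatives; hence each component is a polynomial of degree at most 2. -/
theorem conformal_killing_third_deriv_zero (d : ℕ) (hd : 2 < d)
    (X : (Fin d → ℝ) → (Fin d → ℝ)) (hX : ContDiff ℝ (⊤ : ℕ∞) X)
    (hCK : ∀ α β : Fin d, ∀ x,
      pd α (fun y => X y β) x + pd β (fun y => X y α) x
        = (2 / (d : ℝ)) * (∑ k, pd k (fun y => X y k) x) * (if α = β then 1 else 0)) :
    (∀ lam gam α β : Fin d, ∀ x, pd lam (pd gam (pd α (fun y => X y β))) x = 0) ∧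
    ∀ β : Fin d, ∃ Q : MvPolynomial (Fin d) ℝ, Q.totalDegree ≤ 2 ∧
      ∀ x, X x β = MvPolynomial.eval x Q := by
  have hXb : ∀ β : Fin d, ContDiff ℝ (⊤ : ℕ∞) (fun y => X y β) := fun β => contDiff_pi.mp hX β
  have hφs : ContDiff ℝ (⊤ : ℕ∞) (fun z : Fin d → ℝ => ∑ k, pd k (fun y => X y k) z) :=
    ContDiff.sum fun k _ => pd_smooth (hXb k) k
  -- swap lemmas for third derivatives
  have swap23 : ∀ (f : (Fin d → ℝ) → ℝ), ContDiff ℝ (⊤ : ℕ∞) f → ∀ (i j k : Fin d) (x : Fin d → ℝ),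
      pd i (pd j (pd k f)) x = pd i (pd k (pd j f)) x :=
    fun f hf i j k x => pd_congr (fun z => pd_comm hf j k z) i x
  have swap12 : ∀ (f : (Fin d → ℝ) → ℝ), ContDiff ℝ (⊤ : ℕ∞) f → ∀ (i j k : Fin d) (x : Fin d → ℝ),
      pd i (pd j (pd k f)) x = pd j (pd i (pd k f)) x :=
    fun f hf i j k x => pd_comm (pd_smooth hf k) i j x
  have swap13 : ∀ (f : (Fin d → ℝ) → ℝ), ContDiff ℝ (⊤ : ℕ∞) f → ∀ (i j k : Fin d) (x : Fin d → ℝ),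
      pd i (pd j (pd k f)) x = pd k (pd j (pd i f)) x := by
    intro f hf i j k x
    rw [swap23 f hf i j k x, swap12 f hf i k j x, swap23 f hf k i j x]
  -- first differentiated Killing equation
  have step1 : ∀ (γ α β : Fin d) (x : Fin d → ℝ),
      pd γ (pd α (fun y => X y β)) x + pd γ (pd β (fun y => X y α)) x
        = (2/(d:ℝ) * (if α = β then 1 else 0))
            * pd γ (fun z : Fin d → ℝ => ∑ k, pd k (fun y => X y k) z) x := by
    intro γ α β x
    have e0 : pd γ (fun z => pd α (fun y => X y β) z + pd β (fun y => X y α) z) x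
        = pd γ (fun z => (2/(d:ℝ) * (if α = β then 1 else 0))
            * (∑ k, pd k (fun y => X y k) z)) x :=
      pd_congr (fun z => by rw [hCK α β z]; ring) γ x
    rw [pd_add ((pd_smooth (hXb β) α).differentiable (by simp))
      ((pd_smooth (hXb α) β).differentiable (by simp)) γ x,
      pd_const_mul (hφs.differentiable (by simp)) _ γ x] at e0
    exact e0
  -- second differentiated Killing equation
  have step2 : ∀ (μ γ α β : Fin d) (x : Fin d → ℝ),
      pd μ (pd γ (pd α (fun y => X y β))) x + pd μ (pd γ (pd β (fun y => X y α))) x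
        = (2/(d:ℝ) * pd μ (pd γ (fun z : Fin d → ℝ => ∑ k, pd k (fun y => X y k) z)) x)
            * (if α = β then 1 else 0) := by
    intro μ γ α β x
    have e0 : pd μ (fun z => pd γ (pd α (fun y => X y β)) z
          + pd γ (pd β (fun y => X y α)) z) x
        = pd μ (fun z => (2/(d:ℝ) * (if α = β then 1 else 0))
            * pd γ (fun z : Fin d → ℝ => ∑ k, pd k (fun y => X y k) z) z) x :=
      pd_congr (fun z => step1 γ α β z) μ x
    rw [pd_add ((pd_smooth (pd_smooth (hXb β) α) γ).differentiable (by simp))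
      ((pd_smooth (pd_smooth (hXb α) β) γ).differentiable (by simp)) μ x,
      pd_const_mul ((pd_smooth hφs γ).differentiable (by simp)) _ μ x] at e0
    rw [e0]; ring
  -- the combination: 2 * S = K-terms
  have star : ∀ (μ a b g : Fin d) (x : Fin d → ℝ),
      2 * pd μ (pd a (pd b (fun y => X y g))) x
        = (2/(d:ℝ) * pd μ (pd a (fun z : Fin d → ℝ => ∑ k, pd k (fun y => X y k) z)) x)
            * (if b = g then 1 else 0)
        + (2/(d:ℝ) * pd μ (pd b (fun z : Fin d → ℝ => ∑ k, pd k (fun y => X y k) z)) x)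
            * (if a = g then 1 else 0)
        - (2/(d:ℝ) * pd μ (pd g (fun z : Fin d → ℝ => ∑ k, pd k (fun y => X y k) z)) x)
            * (if a = b then 1 else 0) := by
    intro μ a b g x
    have e1 := step2 μ a b g x
    have e2 := step2 μ b a g x
    have e3 := step2 μ g a b x
    have s1 : pd μ (pd b (pd a (fun y => X y g))) x
        = pd μ (pd a (pd b (fun y => X y g))) x := swap23 _ (hXb g) μ b a x
    have s2 : pd μ (pd a (pd g (fun y => X y b))) x
        = pd μ (pd g (pd a (fun y => X y b))) x := swap23 _ (hXb b) μ a g x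
    have s3 : pd μ (pd b (pd g (fun y => X y a))) x
        = pd μ (pd g (pd b (fun y => X y a))) x := swap23 _ (hXb a) μ b g x
    rw [s1] at e2; rw [s2] at e1; rw [s3] at e2
    linarith
  -- vanishing of second derivatives of the divergence
  have hK0 : ∀ (x : Fin d → ℝ) (i j : Fin d),
      2/(d:ℝ) * pd i (pd j (fun z : Fin d → ℝ => ∑ k, pd k (fun y => X y k) z)) x = 0 := by
    intro x
    refine K_zero hd
      (fun i j => 2/(d:ℝ) * pd i (pd j (fun z : Fin d → ℝ => ∑ k, pd k (fun y => X y k) z)) x)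
      (fun i j => by beta_reduce; rw [pd_comm hφs i j x]) ?_
    intro μ a b g
    have e1 := star μ a b g x
    have e2 := star b a μ g x
    have s13 : pd b (pd a (pd μ (fun y => X y g))) x
        = pd μ (pd a (pd b (fun y => X y g))) x := swap13 _ (hXb g) b a μ x
    rw [s13] at e2
    linarith
  have third : ∀ lam gam α β : Fin d, ∀ x,
      pd lam (pd gam (pd α (fun y => X y β))) x = 0 := by
    intro lam gam α β x
    have e := star lam gam α β x
    rw [hK0 x lam gam, hK0 x lam α, hK0 x lam β] at e
    simp at e
    linarith
  refine ⟨third, ?_⟩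
  intro β
  have hq := fun x => quad_of_pd3_zero (hXb β) (fun i j k x => third i j k β x) x
  refine ⟨MvPolynomial.C ((fun y => X y β) 0)
    + ∑ j, MvPolynomial.C (pd j (fun y => X y β) 0) * MvPolynomial.X j
    + ∑ i, ∑ j, MvPolynomial.C (pd i (pd j (fun y => X y β)) 0 / 2)
        * (MvPolynomial.X i * MvPolynomial.X j), ?_, ?_⟩
  · refine (MvPolynomial.totalDegree_add _ _).trans (max_le ((MvPolynomial.totalDegree_add _ _).trans (max_le ?_ ?_)) ?_)
    · simp [MvPolynomial.totalDegree_C]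
    · refine (MvPolynomial.totalDegree_finset_sum _ _).trans (Finset.sup_le fun j _ => ?_)
      refine (MvPolynomial.totalDegree_mul _ _).trans ?_
      simp [MvPolynomial.totalDegree_C, MvPolynomial.totalDegree_X]
    · refine (MvPolynomial.totalDegree_finset_sum _ _).trans (Finset.sup_le fun i _ => ?_)
      refine (MvPolynomial.totalDegree_finset_sum _ _).trans (Finset.sup_le fun j _ => ?_)
      refine (MvPolynomial.totalDegree_mul _ _).trans ?_
      have := MvPolynomial.totalDegree_mul (MvPolynomial.X i (R := ℝ)) (MvPolynomial.X j)
      simp [MvPolynomial.totalDegree_C, MvPolynomial.totalDegree_X] at this ⊢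
      omega
  · intro x
    have := hq x
    simp only [MvPolynomial.eval_add, MvPolynomial.eval_C, MvPolynomial.eval_mul,
      MvPolynomial.eval_X, map_sum]
    exact this
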